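/- Let n ≥ 1, let 0 < α < 1, and let δ satisfy 1 − α < δ < 1. Then for every measurable set E ⊆ ℝⁿ with |E| < ∞, |{x ∈ ℝⁿ : M_{HL,b} χ_E(x) > α}| ≤ (1 + 2δ^{1/n})^n · (δ/(δ − (1−α))) · |E|. -/

import Mathlib

open MeasureTheory Set Filter
open scoped ENNReal

/-- The uncentered Hardy–Littlewood maximal operator with respect to
Euclidean balls on `ℝⁿ`. -/
noncomputable def MHLb (n : ℕ) (f : EuclideanSpace ℝ (Fin n) → ℝ≥0∞)
    (x : EuclideanSpace ℝ (Fin n)) : ℝ≥0∞ :=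
  ⨆ (z : EuclideanSpace ℝ (Fin n)) (r : ℝ) (_ : 0 < r) (_ : x ∈ Metric.ball z r),
    (∫⁻ y in Metric.ball z r, f y) / volume (Metric.ball z r)

/-!
A point where `M χ_E > α` lies in a ball `B` in which `E` has density `> α`; by inner regularity
it suffices to bound the union of finitely many such balls. Shrinking each by `c = δ^{1/n}` gives
a core `cB` of measure `δ |B|`, which therefore meets `E` in measure `≥ (δ - (1 - α)) |B|`.
A greedy selection yields a subfamily with disjoint cores whose `(1 + 2c)`-dilates cover all the
balls; dilating a union of balls by `L ≥ 1` costs at most a factor `L ^ n`, and disjointness of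
the cores bounds the union of the selected balls by `δ / (δ - (1 - α)) |E|`.
-/

open Metric

section Selection

variable {X ι : Type*} [PseudoMetricSpace X]

theorem Metric.ball_subset_ball_mul_of_not_disjoint {x y : X} {r s c : ℝ} (hc : 0 ≤ c)
    (hrs : r ≤ s) (h : ¬Disjoint (ball x (c * r)) (ball y (c * s))) :
    ball x r ⊆ ball y ((1 + 2 * c) * s) := by
  obtain ⟨w, hwx, hwy⟩ := not_disjoint_iff.mp h
  have hxy : dist x y < c * r + c * s := dist_lt_add_of_nonempty_ball_inter_ball ⟨w, hwx, hwy⟩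
  refine ball_subset_ball' ?_
  nlinarith

/-- Unlike `Vitali.exists_disjoint_subfamily_covering_enlargement_ball`, finiteness allows the
sharp factor `1 + 2c`: select greedily, always taking a ball of largest radius. -/
theorem exists_subset_pairwiseDisjoint_ball_mul_covering (x : ι → X) (r : ι → ℝ) {c : ℝ}
    (hc : 0 ≤ c) (F : Finset ι) :
    ∃ G ⊆ F, (G : Set ι).PairwiseDisjoint (fun j => ball (x j) (c * r j)) ∧
      ∀ i ∈ F, ∃ j ∈ G, ball (x i) (r i) ⊆ ball (x j) ((1 + 2 * c) * r j) := by
  classical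
  induction F using Finset.strongInduction with
  | H F ih =>
  rcases F.eq_empty_or_nonempty with rfl | hF
  · exact ⟨∅, le_rfl, by simp, by simp⟩
  obtain ⟨i₀, hi₀, hmax⟩ := F.exists_max_image r hF
  let core : ι → Set X := fun j => ball (x j) (c * r j)
  obtain ⟨G, hGF, hGdisj, hGcov⟩ :=
    ih ((F.erase i₀).filter fun j => Disjoint (core j) (core i₀))
      ((Finset.filter_subset _ _).trans_ssubset (Finset.erase_ssubset hi₀))
  have hG : ∀ j ∈ G, Disjoint (core j) (core i₀) := fun j hj => (Finset.mem_filter.mp (hGF hj)).2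
  refine ⟨insert i₀ G, Finset.insert_subset hi₀ fun j hj => ?_, ?_, fun i hiF => ?_⟩
  · exact Finset.mem_of_mem_erase (Finset.mem_of_mem_filter j (hGF hj))
  · rw [Finset.coe_insert]
    exact hGdisj.insert fun j hj _ => (hG j hj).symm
  obtain rfl | hii₀ := eq_or_ne i i₀
  · exact ⟨i, Finset.mem_insert_self _ _, fun y hy =>
      ball_subset_ball (by nlinarith [pos_of_mem_ball hy]) hy⟩
  by_cases hcore : Disjoint (core i) (core i₀)
  · obtain ⟨j, hj, hij⟩ :=
      hGcov i (Finset.mem_filter.mpr ⟨Finset.mem_erase.mpr ⟨hii₀, hiF⟩, hcore⟩)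
    exact ⟨j, Finset.mem_insert_of_mem hj, hij⟩
  · exact ⟨i₀, Finset.mem_insert_self _ _,
      ball_subset_ball_mul_of_not_disjoint hc (hmax i hiF) hcore⟩

end Selection

section Dilation

variable {E ι : Type*} [NormedAddCommGroup E] [NormedSpace ℝ E]

theorem homothety_mem_ball_mul {x₀ y z : E} {r₀ r L : ℝ} (hL : 1 ≤ L) (hr : r₀ ≤ r)
    (hy₀ : y ∈ ball x₀ r₀) (hy : y ∈ ball z r) :
    AffineMap.homothety x₀ L y ∈ ball z (L * r) := by
  rw [mem_ball] at hy₀ hy ⊢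
  have hmove : dist (AffineMap.homothety x₀ L y) y ≤ (L - 1) * r₀ := by
    rw [dist_homothety_self, Real.norm_eq_abs, abs_sub_comm, abs_of_nonneg (by linarith),
      dist_comm]
    exact mul_le_mul_of_nonneg_left hy₀.le (by linarith)
  calc dist (AffineMap.homothety x₀ L y) z
      ≤ dist (AffineMap.homothety x₀ L y) y + dist y z := dist_triangle _ _ _
    _ < (L - 1) * r₀ + r := by linarith
    _ ≤ L * r := by nlinarith

theorem ball_mul_subset_homothety_image_ball {x₀ : E} {r₀ L : ℝ} (hL : 0 < L) :
    ball x₀ (L * r₀) ⊆ AffineMap.homothety x₀ L '' ball x₀ r₀ := by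
  intro x hx
  refine ⟨AffineMap.homothety x₀ L⁻¹ x, ?_, ?_⟩
  · rw [mem_ball, dist_homothety_center, dist_comm, Real.norm_eq_abs, abs_inv, abs_of_pos hL,
      inv_mul_lt_iff₀ hL]
    exact hx
  · rw [← AffineMap.homothety_mul_apply, mul_inv_cancel₀ hL.ne', AffineMap.homothety_one,
      AffineMap.id_apply]

variable [MeasurableSpace E] [BorelSpace E] [FiniteDimensional ℝ E] (μ : Measure E)
  [μ.IsAddHaarMeasure]

/-- Add the balls in order of decreasing radius: the part of the new dilated ball not covered by
the earlier dilates is contained in the homothetic image of the part of the new ball not covered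
by the earlier balls. -/
theorem addHaar_biUnion_ball_mul_le (x : ι → E) (r : ι → ℝ) {L : ℝ} (hL : 1 ≤ L)
    (F : Finset ι) :
    μ (⋃ i ∈ F, ball (x i) (L * r i))
      ≤ ENNReal.ofReal (L ^ Module.finrank ℝ E) * μ (⋃ i ∈ F, ball (x i) (r i)) := by
  classical
  induction F using Finset.induction_on_min_value r with
  | empty => simp
  | insert i₀ F _ hmin ih =>
  set U := ⋃ i ∈ F, ball (x i) (r i)
  set B₀ := ball (x i₀) (r i₀)
  have hnew : ball (x i₀) (L * r i₀) \ ⋃ i ∈ F, ball (x i) (L * r i)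
      ⊆ AffineMap.homothety (x i₀) L '' (B₀ \ U) := by
    rintro _ ⟨hx, hxD⟩
    obtain ⟨y, hy₀, rfl⟩ := ball_mul_subset_homothety_image_ball (by linarith) hx
    refine ⟨y, ⟨hy₀, fun hyU => hxD ?_⟩, rfl⟩
    obtain ⟨i, hi, hy⟩ := mem_iUnion₂.mp hyU
    exact mem_iUnion₂.mpr ⟨i, hi, homothety_mem_ball_mul hL (hmin i hi) hy₀ hy⟩
  have hL0 : 0 ≤ L ^ Module.finrank ℝ E := by positivity
  rw [Finset.set_biUnion_insert, Finset.set_biUnion_insert, union_comm, union_comm B₀]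
  calc μ ((⋃ i ∈ F, ball (x i) (L * r i)) ∪ ball (x i₀) (L * r i₀))
      ≤ μ (⋃ i ∈ F, ball (x i) (L * r i))
          + μ (ball (x i₀) (L * r i₀) \ ⋃ i ∈ F, ball (x i) (L * r i)) := by
        rw [← union_sdiff_self]; exact measure_union_le _ _
    _ ≤ ENNReal.ofReal (L ^ Module.finrank ℝ E) * μ U
          + ENNReal.ofReal (L ^ Module.finrank ℝ E) * μ (B₀ \ U) := by
        gcongr
        refine (measure_mono hnew).trans_eq ?_
        rw [Measure.addHaar_image_homothety, abs_of_nonneg hL0]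
    _ = ENNReal.ofReal (L ^ Module.finrank ℝ E) * μ (U ∪ B₀) := by
        rw [← mul_add, ← measure_union disjoint_sdiff_right (measurableSet_ball.diff
          (Finset.measurableSet_biUnion _ fun _ _ => measurableSet_ball)), union_sdiff_self]

end Dilation

section Density

variable {X ι : Type*} [MeasurableSpace X] {μ : Measure X} {s B Q : Set X} {α δ : ℝ}

theorem measure_diff_le_of_le_measure_inter (hs : MeasurableSet s) (hB : μ B ≠ ∞)
    (hα0 : 0 ≤ α) (hα1 : α ≤ 1) (hdense : ENNReal.ofReal α * μ B ≤ μ (s ∩ B)) :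
    μ (B \ s) ≤ ENNReal.ofReal (1 - α) * μ B := by
  have hfin : ENNReal.ofReal α * μ B ≠ ∞ := ENNReal.mul_ne_top ENNReal.ofReal_ne_top hB
  refine (ENNReal.add_le_add_iff_left hfin).mp ?_
  calc ENNReal.ofReal α * μ B + μ (B \ s) ≤ μ (B ∩ s) + μ (B \ s) := by
        rw [inter_comm]; gcongr
    _ = ENNReal.ofReal α * μ B + ENNReal.ofReal (1 - α) * μ B := by
        rw [measure_inter_add_sdiff _ hs, ← add_mul, ← ENNReal.ofReal_add hα0 (by linarith),
          add_sub_cancel, ENNReal.ofReal_one, one_mul]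

theorem le_measure_inter_of_subset_of_le_measure_inter (hs : MeasurableSet s) (hB : μ B ≠ ∞)
    (hα0 : 0 ≤ α) (hα1 : α ≤ 1) (hδ : 1 - α ≤ δ) (hQB : Q ⊆ B)
    (hQ : μ Q = ENNReal.ofReal δ * μ B) (hdense : ENNReal.ofReal α * μ B ≤ μ (s ∩ B)) :
    ENNReal.ofReal (δ - (1 - α)) * μ B ≤ μ (s ∩ Q) := by
  have hfin : ENNReal.ofReal (1 - α) * μ B ≠ ∞ := ENNReal.mul_ne_top ENNReal.ofReal_ne_top hB
  refine (ENNReal.add_le_add_iff_right hfin).mp ?_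
  calc ENNReal.ofReal (δ - (1 - α)) * μ B + ENNReal.ofReal (1 - α) * μ B = μ Q := by
        rw [← add_mul, ← ENNReal.ofReal_add (by linarith) (by linarith), sub_add_cancel, hQ]
    _ ≤ μ (s ∩ Q) + μ (B \ s) := by
        rw [← measure_inter_add_sdiff Q hs, inter_comm]
        gcongr
    _ ≤ μ (s ∩ Q) + ENNReal.ofReal (1 - α) * μ B := by
        gcongr
        exact measure_diff_le_of_le_measure_inter hs hB hα0 hα1 hdense

/-- The disjoint cores give `(δ - (1 - α)) ∑ μ (B i) ≤ μ s`, while the union of the `B i` exceeds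
`s` by at most `(1 - α) ∑ μ (B i)`. -/
theorem measure_biUnion_le_of_pairwiseDisjoint_cores (hs : MeasurableSet s) (hα0 : 0 ≤ α)
    (hα1 : α ≤ 1) (hδ : 1 - α < δ) (F : Finset ι) {B Q : ι → Set X}
    (hQm : ∀ i ∈ F, MeasurableSet (Q i)) (hQB : ∀ i ∈ F, Q i ⊆ B i)
    (hBQ : ∀ i ∈ F, μ (Q i) = ENNReal.ofReal δ * μ (B i)) (hB : ∀ i ∈ F, μ (B i) ≠ ∞)
    (hdisj : (F : Set ι).PairwiseDisjoint Q)
    (hdense : ∀ i ∈ F, ENNReal.ofReal α * μ (B i) ≤ μ (s ∩ B i)) :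
    μ (⋃ i ∈ F, B i) ≤ ENNReal.ofReal (δ / (δ - (1 - α))) * μ s := by
  set a := ENNReal.ofReal (δ - (1 - α))
  set S := ∑ i ∈ F, μ (B i)
  have ha : a ≠ 0 := ENNReal.ofReal_pos.mpr (by linarith) |>.ne'
  have hcores : a * S ≤ μ s :=
    calc a * S = ∑ i ∈ F, a * μ (B i) := Finset.mul_sum _ _ _
      _ ≤ ∑ i ∈ F, μ (s ∩ Q i) := Finset.sum_le_sum fun i hi =>
          le_measure_inter_of_subset_of_le_measure_inter hs (hB i hi) hα0 hα1 hδ.le (hQB i hi)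
            (hBQ i hi) (hdense i hi)
      _ = μ (⋃ i ∈ F, s ∩ Q i) :=
          (measure_biUnion_finset (hdisj.mono_on fun _ _ => inter_subset_right)
            fun i hi => hs.inter (hQm i hi)).symm
      _ ≤ μ s := measure_mono (iUnion₂_subset fun _ _ => inter_subset_left)
  have hunion : μ (⋃ i ∈ F, B i) ≤ μ s + ENNReal.ofReal (1 - α) * S :=
    calc μ (⋃ i ∈ F, B i) ≤ μ ((⋃ i ∈ F, B i) ∩ s) + μ ((⋃ i ∈ F, B i) \ s) :=
          measure_le_inter_add_sdiff _ _ _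
      _ ≤ μ s + ∑ i ∈ F, μ (B i \ s) := by
          gcongr
          · exact inter_subset_right
          · simp only [iUnion_sdiff]
            exact measure_biUnion_finset_le _ _
      _ ≤ μ s + ENNReal.ofReal (1 - α) * S := by
          rw [Finset.mul_sum]
          gcongr with i hi
          exact measure_diff_le_of_le_measure_inter hs (hB i hi) hα0 hα1 (hdense i hi)
  have key : a * μ (⋃ i ∈ F, B i) ≤ ENNReal.ofReal δ * μ s :=
    calc a * μ (⋃ i ∈ F, B i) ≤ a * μ s + ENNReal.ofReal (1 - α) * (a * S) := by
          rw [mul_left_comm, ← mul_add]; gcongr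
      _ ≤ a * μ s + ENNReal.ofReal (1 - α) * μ s := by gcongr
      _ = ENNReal.ofReal δ * μ s := by
          rw [← add_mul, ← ENNReal.ofReal_add (by linarith) (by linarith), sub_add_cancel]
  rw [ENNReal.ofReal_div_of_pos (by linarith), ← ENNReal.mul_div_right_comm,
    ENNReal.le_div_iff_mul_le (Or.inl ha) (Or.inl ENNReal.ofReal_ne_top), mul_comm]
  exact key

end Density

section Covering

variable {E ι : Type*} [NormedAddCommGroup E] [NormedSpace ℝ E] [MeasurableSpace E]
  [BorelSpace E] [FiniteDimensional ℝ E] (μ : Measure E) [μ.IsAddHaarMeasure]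

theorem addHaar_biUnion_ball_le_of_dense (x : ι → E) (r : ι → ℝ) {s : Set E}
    (hs : MeasurableSet s) {c α : ℝ} (hc0 : 0 < c) (hc1 : c ≤ 1) (hα0 : 0 ≤ α) (hα1 : α ≤ 1)
    (hcα : 1 - α < c ^ Module.finrank ℝ E) (F : Finset ι)
    (hdense : ∀ i ∈ F, ENNReal.ofReal α * μ (ball (x i) (r i)) ≤ μ (s ∩ ball (x i) (r i))) :
    μ (⋃ i ∈ F, ball (x i) (r i))
      ≤ ENNReal.ofReal ((1 + 2 * c) ^ Module.finrank ℝ E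
          * (c ^ Module.finrank ℝ E / (c ^ Module.finrank ℝ E - (1 - α)))) * μ s := by
  obtain ⟨G, hGF, hGdisj, hGcov⟩ := exists_subset_pairwiseDisjoint_ball_mul_covering x r hc0.le F
  have hcore : ∀ j ∈ G, μ (ball (x j) (c * r j))
      = ENNReal.ofReal (c ^ Module.finrank ℝ E) * μ (ball (x j) (r j)) := fun j _ => by
    rw [Measure.addHaar_ball_mul_of_pos μ _ hc0, ← Measure.addHaar_ball_center μ (x j)]
  calc μ (⋃ i ∈ F, ball (x i) (r i))
      ≤ μ (⋃ j ∈ G, ball (x j) ((1 + 2 * c) * r j)) := measure_mono <| iUnion₂_subset fun i hi =>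
        let ⟨j, hj, hij⟩ := hGcov i hi
        hij.trans (subset_biUnion_of_mem (u := fun j => ball (x j) ((1 + 2 * c) * r j)) hj)
    _ ≤ ENNReal.ofReal ((1 + 2 * c) ^ Module.finrank ℝ E) * μ (⋃ j ∈ G, ball (x j) (r j)) :=
        addHaar_biUnion_ball_mul_le μ x r (by linarith) G
    _ ≤ ENNReal.ofReal ((1 + 2 * c) ^ Module.finrank ℝ E)
          * (ENNReal.ofReal (c ^ Module.finrank ℝ E / (c ^ Module.finrank ℝ E - (1 - α)))
            * μ s) := by
        gcongr
        exact measure_biUnion_le_of_pairwiseDisjoint_cores hs hα0 hα1 hcα G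
          (fun _ _ => measurableSet_ball)
          (fun _ _ _ hy => ball_subset_ball (by nlinarith [pos_of_mem_ball hy]) hy) hcore
          (fun _ _ => measure_ball_lt_top.ne) hGdisj fun j hj => hdense j (hGF hj)
    _ = _ := by rw [← mul_assoc, ← ENNReal.ofReal_mul (by positivity)]

end Covering

theorem measure_iUnion_le_of_forall_finset {X ι : Type*} [TopologicalSpace X]
    [MeasurableSpace X] (μ : Measure X) [μ.Regular] {U : ι → Set X} (hU : ∀ i, IsOpen (U i))
    {C : ℝ≥0∞} (h : ∀ F : Finset ι, μ (⋃ i ∈ F, U i) ≤ C) : μ (⋃ i, U i) ≤ C := by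
  rw [(isOpen_iUnion hU).measure_eq_iSup_isCompact]
  refine iSup_le fun K => iSup_le fun hKU => iSup_le fun hK => ?_
  obtain ⟨F, hF⟩ := hK.elim_finite_subcover U hU hKU
  exact (measure_mono hF).trans (h F)

theorem exists_mem_ball_mul_lt_measure_inter_of_lt_MHLb {n : ℕ}
    {s : Set (EuclideanSpace ℝ (Fin n))} (hs : MeasurableSet s) {t : ℝ≥0∞}
    {x : EuclideanSpace ℝ (Fin n)} (hx : t < MHLb n (s.indicator 1) x) :
    ∃ z r, x ∈ ball z r ∧ t * volume (ball z r) < volume (s ∩ ball z r) := by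
  simp only [MHLb, lt_iSup_iff] at hx
  obtain ⟨z, r, hr, hxz, hlt⟩ := hx
  rw [lintegral_indicator_one hs, Measure.restrict_apply hs] at hlt
  exact ⟨z, r, hxz, (ENNReal.lt_div_iff_mul_lt (Or.inl (measure_ball_pos volume z hr).ne')
    (Or.inl measure_ball_lt_top.ne)).mp hlt⟩

theorem uncentered_ball_solyanik_quantitative (n : ℕ) (hn : 1 ≤ n)
    (α δ : ℝ) (hα0 : 0 < α) (hα1 : α < 1) (hδ : 1 - α < δ) (hδ1 : δ < 1)
    (E : Set (EuclideanSpace ℝ (Fin n))) (hE : MeasurableSet E) :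
    volume {x : EuclideanSpace ℝ (Fin n) |
        MHLb n (E.indicator 1) x > ENNReal.ofReal α}
      ≤ ENNReal.ofReal
          ((1 + 2 * δ ^ ((n : ℝ)⁻¹)) ^ n * (δ / (δ - (1 - α)))) * volume E := by
  have hδ0 : 0 ≤ δ := by linarith
  set c := δ ^ ((n : ℝ)⁻¹)
  have hc0 : 0 < c := Real.rpow_pos_of_pos (by linarith) _
  have hc1 : c ≤ 1 := Real.rpow_le_one hδ0 hδ1.le (by positivity)
  have hcn : c ^ n = δ := Real.rpow_inv_natCast_pow hδ0 (by omega)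
  let D := {p : EuclideanSpace ℝ (Fin n) × ℝ //
    ENNReal.ofReal α * volume (ball p.1 p.2) < volume (E ∩ ball p.1 p.2)}
  calc volume {x | MHLb n (E.indicator 1) x > ENNReal.ofReal α}
      ≤ volume (⋃ p : D, ball p.1.1 p.1.2) := measure_mono fun x hx => by
        obtain ⟨z, r, hxz, hzr⟩ := exists_mem_ball_mul_lt_measure_inter_of_lt_MHLb hE hx
        exact mem_iUnion.mpr ⟨⟨(z, r), hzr⟩, hxz⟩
    _ ≤ _ := measure_iUnion_le_of_forall_finset volume (fun _ => isOpen_ball) fun F => by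
        simpa only [finrank_euclideanSpace_fin, hcn] using
          addHaar_biUnion_ball_le_of_dense volume (fun p : D => p.1.1) (fun p => p.1.2) hE
            hc0 hc1 hα0.le hα1.le (by rwa [finrank_euclideanSpace_fin, hcn]) F fun p _ => p.2.le
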